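/- arXiv:2506.01126 — 3 statements merged into one kernel-verified Lean document; each statement's English description precedes it below -/
import Mathlib

section
/- Let P be a Borel probability measure on ℝ^d, let X be a random vector with distribution P, and assume there exists a positive function g : (0,∞) → (0,∞) such that liminf_{R→∞} inf_{θ ∈ S^{d−1}} P(⟨θ,X⟩ ≥ R)/g(R) > 0. Then there exist constants c > 0 and R_0 > 0, independent of x and t, such that for every x ≠ 0 and every t > 0 with t‖x‖ > R_0, one has HD(tx,P) ≥ c·g(t‖x‖); consequently P(H) ≥ c·g(t‖x‖) for every closed halfspace H containing tx. -/
open MeasureTheory Filter Topology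
open scoped RealInnerProductSpace ENNReal Pointwise

noncomputable section

/-- The collection of closed halfspaces of `ℝ^d`. -/
def halfspaces (d : ℕ) : Set (Set (EuclideanSpace ℝ (Fin d))) :=
  {H | ∃ (h : EuclideanSpace ℝ (Fin d)) (c : ℝ), h ≠ 0 ∧ H = {y | c ≤ ⟪h, y⟫}}

/-- The collection `𝓗_z` of closed halfspaces of `ℝ^d` containing the point `z`. -/
def halfspacesAt {d : ℕ} (z : EuclideanSpace ℝ (Fin d)) : Set (Set (EuclideanSpace ℝ (Fin d))) :=
  {H | H ∈ halfspaces d ∧ z ∈ H}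

/-- The halfspace (Tukey) depth of `x` with respect to the measure `P`:
`HD(x,P) = inf { P(H) : H a closed halfspace containing x }`. -/
def HD {d : ℕ} (P : Measure (EuclideanSpace ℝ (Fin d))) (x : EuclideanSpace ℝ (Fin d)) : ℝ :=
  sInf ((fun H => (P H).toReal) '' halfspacesAt x)

/-- Empirical measure `P_n = (1/n) ∑_{i<n} δ_{X i}`. -/
def empMeasure {d : ℕ} (n : ℕ) (X : ℕ → EuclideanSpace ℝ (Fin d)) :
    Measure (EuclideanSpace ℝ (Fin d)) :=
  (n : ℝ≥0∞)⁻¹ • ∑ i ∈ Finset.range n, Measure.dirac (X i)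

/-- The class `𝓒_t` in the definition of Alexander's capacity function. -/
def capacityClass {d : ℕ} (P : Measure (EuclideanSpace ℝ (Fin d))) (t : ℝ) :
    Set (Set (EuclideanSpace ℝ (Fin d))) :=
  {C | C ∈ halfspaces d ∧ (P C).toReal * (1 - (P C).toReal) ≤ t ∧ (P C).toReal ≤ 1/2} ∪
  {C | ∃ H ∈ halfspaces d, C = Hᶜ ∧ (P H).toReal * (1 - (P H).toReal) ≤ t ∧ 1/2 < (P H).toReal}

/-- The capacity function `g_c(t) = max(P(E_t), t)/t` of `P` for the class of all
closed halfspaces. -/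
def gcap {d : ℕ} (P : Measure (EuclideanSpace ℝ (Fin d))) (t : ℝ) : ℝ :=
  max (P (⋃₀ capacityClass P t)).toReal t / t

/-- If `liminf_{R→∞} inf_{θ ∈ S^{d-1}} P(⟨θ,X⟩ ≥ R)/g(R) > 0` for a positive
function `g`, then there are `c > 0` and `R₀ > 0` such that for every `x ≠ 0` and `t > 0` with
`t‖x‖ > R₀` one has `HD(tx,P) ≥ c g(t‖x‖)`, and consequently `P(H) ≥ c g(t‖x‖)` for every
closed halfspace `H` containing `tx`. -/
theorem halfspace_depth_lower_bound_tail
    {d : ℕ} (P : Measure (EuclideanSpace ℝ (Fin d))) [IsProbabilityMeasure P]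
    (g : ℝ → ℝ) (hg : ∀ R > 0, 0 < g R)
    (hliminf : 0 < Filter.liminf (fun R : ℝ =>
        (⨅ θ : Metric.sphere (0 : EuclideanSpace ℝ (Fin d)) 1,
          (P {y | R ≤ ⟪(θ : EuclideanSpace ℝ (Fin d)), y⟫}).toReal) / g R) atTop) :
    ∃ c > 0, ∃ R₀ > 0, ∀ x : EuclideanSpace ℝ (Fin d), ∀ t : ℝ,
      x ≠ 0 → 0 < t → R₀ < t * ‖x‖ →
        c * g (t * ‖x‖) ≤ HD P (t • x) ∧
        ∀ H ∈ halfspacesAt (t • x), c * g (t * ‖x‖) ≤ (P H).toReal := by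
  set u : ℝ → ℝ := fun R => (⨅ θ : Metric.sphere (0 : EuclideanSpace ℝ (Fin d)) 1,
          (P {y | R ≤ ⟪(θ : EuclideanSpace ℝ (Fin d)), y⟫}).toReal) / g R with hu
  have hinf_nonneg : ∀ R : ℝ,
      0 ≤ ⨅ θ : Metric.sphere (0 : EuclideanSpace ℝ (Fin d)) 1,
          (P {y | R ≤ ⟪(θ : EuclideanSpace ℝ (Fin d)), y⟫}).toReal := fun R =>
    Real.iInf_nonneg fun θ => ENNReal.toReal_nonneg
  have hbdd : Filter.IsBoundedUnder (· ≥ ·) atTop u := by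
    refine isBoundedUnder_of_eventually_ge (a := 0) ?_
    filter_upwards [Filter.eventually_gt_atTop 0] with R hR
    exact div_nonneg (hinf_nonneg R) (hg R hR).le
  set L := Filter.liminf u atTop with hL
  have hLpos : 0 < L := hliminf
  have hev : ∀ᶠ R in atTop, L / 2 < u R :=
    Filter.eventually_lt_of_lt_liminf (half_lt_self hLpos) hbdd
  obtain ⟨a, ha⟩ := Filter.eventually_atTop.mp hev
  refine ⟨L / 2, half_pos hLpos, max a 1, lt_of_lt_of_le one_pos (le_max_right a 1), ?_⟩
  intro x t hx ht hR
  set R := t * ‖x‖ with hRdef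
  have hRpos : 0 < R := lt_of_lt_of_le one_pos ((le_max_right a 1).trans hR.le)
  have hcu : L / 2 < u R := ha R ((le_max_left a 1).trans hR.le)
  have hkey : L / 2 * g R <
      ⨅ θ : Metric.sphere (0 : EuclideanSpace ℝ (Fin d)) 1,
          (P {y | R ≤ ⟪(θ : EuclideanSpace ℝ (Fin d)), y⟫}).toReal :=
    (lt_div_iff₀ (hg R hRpos)).mp hcu
  have hmain : ∀ H ∈ halfspacesAt (t • x), L / 2 * g R ≤ (P H).toReal := by
    rintro H ⟨⟨h, cc, hne, rfl⟩, hmem⟩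
    have hmem' : cc ≤ ⟪h, t • x⟫ := hmem
    have hhnorm : (0 : ℝ) < ‖h‖ := norm_pos_iff.mpr hne
    set θ : EuclideanSpace ℝ (Fin d) := (‖h‖)⁻¹ • h with hθ
    have hθnorm : ‖θ‖ = 1 := by
      rw [hθ, norm_smul, norm_inv, norm_norm, inv_mul_cancel₀ hhnorm.ne']
    have hθmem : θ ∈ Metric.sphere (0 : EuclideanSpace ℝ (Fin d)) 1 :=
      mem_sphere_zero_iff_norm.mpr hθnorm
    have hsub : {y : EuclideanSpace ℝ (Fin d) | R ≤ ⟪θ, y⟫} ⊆ {y | cc ≤ ⟪h, y⟫} := by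
      intro y hy
      have h1 : ⟪θ, y⟫ = ‖h‖⁻¹ * ⟪h, y⟫ := real_inner_smul_left h y (‖h‖)⁻¹
      have h2 : ‖h‖ * R ≤ ⟪h, y⟫ := by
        have h4 := mul_le_mul_of_nonneg_left hy hhnorm.le
        rw [h1] at h4
        calc ‖h‖ * R ≤ ‖h‖ * (‖h‖⁻¹ * ⟪h, y⟫) := h4
          _ = ⟪h, y⟫ := by field_simp
      have h3 : ⟪h, t • x⟫ ≤ ‖h‖ * R := by
        calc ⟪h, t • x⟫ ≤ ‖h‖ * ‖t • x‖ := real_inner_le_norm h (t • x)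
          _ = ‖h‖ * R := by rw [norm_smul, Real.norm_eq_abs, abs_of_pos ht, hRdef]
      exact le_trans hmem' (le_trans h3 h2)
    have hPmono : (P {y : EuclideanSpace ℝ (Fin d) | R ≤ ⟪θ, y⟫}).toReal ≤ (P _).toReal :=
      ENNReal.toReal_mono (measure_ne_top P _) (measure_mono hsub)
    have hinf_le : (⨅ θ : Metric.sphere (0 : EuclideanSpace ℝ (Fin d)) 1,
          (P {y | R ≤ ⟪(θ : EuclideanSpace ℝ (Fin d)), y⟫}).toReal) ≤
        (P {y : EuclideanSpace ℝ (Fin d) | R ≤ ⟪θ, y⟫}).toReal :=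
      ciInf_le ⟨0, by rintro z ⟨θ', rfl⟩; exact ENNReal.toReal_nonneg⟩ (⟨θ, hθmem⟩ : Metric.sphere (0 : EuclideanSpace ℝ (Fin d)) 1)
    exact le_trans hkey.le (le_trans hinf_le hPmono)
  refine ⟨?_, hmain⟩
  have hne : halfspacesAt (t • x) |>.Nonempty := by
    refine ⟨{y | ⟪x, t • x⟫ ≤ ⟪x, y⟫}, ⟨x, ⟪x, t • x⟫, hx, rfl⟩, show ⟪x, t • x⟫ ≤ ⟪x, t • x⟫ from le_refl _⟩
  refine le_csInf (hne.image _) ?_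
  rintro b ⟨H, hH, rfl⟩
  exact hmain H hH
end
end

section
/- Let P and Q be Borel probability measures on ℝ^d and let z ∈ ℝ^d be such that HD(z,P) > 0 and the infima defining HD(z,P) and HD(z,Q) over closed halfspaces containing z are attained. Then |HD(z,Q)/HD(z,P) − 1| ≤ sup_{H ∈ 𝓗_z} |Q(H)/P(H) − 1|, where 𝓗_z denotes the set of all closed halfspaces of ℝ^d containing z. In particular, if P_n is the empirical measure of an i.i.d. sample from P, then for any t_n > 0 and x ∈ ℝ^d, |HD(t_n x,P_n)/HD(t_n x,P) − 1| ≤ sup_{H ∈ 𝓗_{t_n x}} |P_n(H)/P(H) − 1|. -/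
open MeasureTheory Filter Topology
open scoped RealInnerProductSpace ENNReal Pointwise

noncomputable section

/-!
If `H₁` attains `HD(z,P)`, then `HD(z,Q) ≤ Q(H₁)` gives `HD(z,Q)/HD(z,P) ≤ Q(H₁)/P(H₁)`;
if `H₂` attains `HD(z,Q)`, then `HD(z,P) ≤ P(H₂)` gives `Q(H₂)/P(H₂) ≤ HD(z,Q)/HD(z,P)`.
So the ratio of depths lies between two ratios `Q(H)/P(H)` with `H ∈ 𝓗_z`, and its distance to `1`
is at most theirs. The empirical statement is the case `Q = P_n`, a finite measure.
-/

lemma abs_div_sub_one_le_sSup_of_isLeast {ι : Type*} {s : Set ι} {p q : ι → ℝ} {a b : ℝ}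
    (ha : 0 < a) (hb : 0 ≤ b) (hp : IsLeast (p '' s) a) (hq : IsLeast (q '' s) b)
    (hq_bdd : BddAbove (q '' s)) :
    |b / a - 1| ≤ sSup {r : ℝ | ∃ i ∈ s, r = |q i / p i - 1|} := by
  obtain ⟨⟨i₁, hi₁, hpi₁⟩, hp_le⟩ := hp
  obtain ⟨⟨i₂, hi₂, hqi₂⟩, hq_le⟩ := hq
  obtain ⟨M, hM⟩ := hq_bdd
  have hbdd : BddAbove {r : ℝ | ∃ i ∈ s, r = |q i / p i - 1|} := by
    refine ⟨M / a + 1, ?_⟩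
    rintro r ⟨i, hi, rfl⟩
    have hqi : 0 ≤ q i := hb.trans (hq_le ⟨i, hi, rfl⟩)
    have hratio : q i / p i ≤ M / a :=
      div_le_div₀ (hqi.trans (hM ⟨i, hi, rfl⟩)) (hM ⟨i, hi, rfl⟩) ha (hp_le ⟨i, hi, rfl⟩)
    have hratio_nonneg : 0 ≤ q i / p i := div_nonneg hqi (ha.le.trans (hp_le ⟨i, hi, rfl⟩))
    rw [abs_sub_le_iff]
    constructor <;> linarith
  have h₁ : b / a ≤ q i₁ / p i₁ := by
    rw [hpi₁]
    exact div_le_div_of_nonneg_right (hq_le ⟨i₁, hi₁, rfl⟩) ha.le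
  have h₂ : q i₂ / p i₂ ≤ b / a := by
    rw [hqi₂]
    exact div_le_div_of_nonneg_left hb ha (hp_le ⟨i₂, hi₂, rfl⟩)
  have hsup₁ := le_csSup hbdd ⟨i₁, hi₁, rfl⟩
  have hsup₂ := le_csSup hbdd ⟨i₂, hi₂, rfl⟩
  rw [abs_sub_le_iff]
  constructor
  · linarith [le_abs_self (q i₁ / p i₁ - 1)]
  · linarith [neg_abs_le (q i₂ / p i₂ - 1)]

section HalfspaceDepth

variable {d : ℕ} (P Q : Measure (EuclideanSpace ℝ (Fin d))) (z : EuclideanSpace ℝ (Fin d))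

lemma HD_nonneg : 0 ≤ HD P z :=
  Real.sInf_nonneg (by rintro _ ⟨H, -, rfl⟩; exact ENNReal.toReal_nonneg)

lemma HD_le_toReal_measure {H : Set (EuclideanSpace ℝ (Fin d))} (hH : H ∈ halfspacesAt z) :
    HD P z ≤ (P H).toReal :=
  csInf_le ⟨0, by rintro _ ⟨G, -, rfl⟩; exact ENNReal.toReal_nonneg⟩ ⟨H, hH, rfl⟩

variable {P z} in
lemma isLeast_HD (h : ∃ H ∈ halfspacesAt z, (P H).toReal = HD P z) :
    IsLeast ((fun H => (P H).toReal) '' halfspacesAt z) (HD P z) := by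
  obtain ⟨H, hH, hPH⟩ := h
  exact ⟨⟨H, hH, hPH⟩, by rintro _ ⟨G, hG, rfl⟩; exact HD_le_toReal_measure P z hG⟩

lemma abs_HD_div_HD_sub_one_le [IsFiniteMeasure Q] (hP_pos : 0 < HD P z)
    (hP : ∃ H ∈ halfspacesAt z, (P H).toReal = HD P z)
    (hQ : ∃ H ∈ halfspacesAt z, (Q H).toReal = HD Q z) :
    |HD Q z / HD P z - 1| ≤
      sSup {r : ℝ | ∃ H ∈ halfspacesAt z, r = |(Q H).toReal / (P H).toReal - 1|} :=
  abs_div_sub_one_le_sSup_of_isLeast hP_pos (HD_nonneg Q z) (isLeast_HD hP) (isLeast_HD hQ)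
    ⟨(Q Set.univ).toReal, by
      rintro _ ⟨H, -, rfl⟩
      exact ENNReal.toReal_mono (measure_ne_top Q _) (measure_mono (Set.subset_univ H))⟩

instance isFiniteMeasure_empMeasure (n : ℕ) (X : ℕ → EuclideanSpace ℝ (Fin d)) :
    IsFiniteMeasure (empMeasure n X) := by
  rcases Nat.eq_zero_or_pos n with rfl | hn
  · simp only [empMeasure, Finset.range_zero, Finset.sum_empty, smul_zero]
    infer_instance
  · exact Measure.smul_finite _ (ENNReal.inv_ne_top.mpr (by exact_mod_cast hn.ne'))

end HalfspaceDepth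

theorem halfspace_depth_ratio_bound_general
    {d : ℕ} (P Q : Measure (EuclideanSpace ℝ (Fin d)))
    [IsProbabilityMeasure Q] :
    (∀ z : EuclideanSpace ℝ (Fin d),
      0 < HD P z →
      (∃ H ∈ halfspacesAt z, (P H).toReal = HD P z) →
      (∃ H ∈ halfspacesAt z, (Q H).toReal = HD Q z) →
      |HD Q z / HD P z - 1| ≤
        sSup {r : ℝ | ∃ H ∈ halfspacesAt z, r = |(Q H).toReal / (P H).toReal - 1|}) ∧
    (∀ {Ω : Type} [MeasurableSpace Ω] (μ : Measure Ω) [IsProbabilityMeasure μ]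
      (X : ℕ → Ω → EuclideanSpace ℝ (Fin d)),
      (∀ i, Measurable (X i)) →
      ProbabilityTheory.iIndepFun X μ →
      (∀ i, Measure.map (X i) μ = P) →
      ∀ (n : ℕ) (ω : Ω) (tn : ℝ) (x : EuclideanSpace ℝ (Fin d)),
        0 < tn →
        0 < HD P (tn • x) →
        (∃ H ∈ halfspacesAt (tn • x), (P H).toReal = HD P (tn • x)) →
        (∃ H ∈ halfspacesAt (tn • x),
          (empMeasure n (fun i => X i ω) H).toReal = HD (empMeasure n (fun i => X i ω)) (tn • x)) →
        |HD (empMeasure n (fun i => X i ω)) (tn • x) / HD P (tn • x) - 1| ≤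
          sSup {r : ℝ | ∃ H ∈ halfspacesAt (tn • x),
            r = |(empMeasure n (fun i => X i ω) H).toReal / (P H).toReal - 1|}) := by
  refine ⟨fun z hP_pos hP hQ => abs_HD_div_HD_sub_one_le P Q z hP_pos hP hQ, ?_⟩
  intro Ω _ μ _ X _ _ _ n ω tn x _ hP_pos hP hQ
  exact abs_HD_div_HD_sub_one_le P _ (tn • x) hP_pos hP hQ

/-- If `HD(z,P) > 0` and the infima defining `HD(z,P)` and `HD(z,Q)` over
closed halfspaces containing `z` are attained, then
`|HD(z,Q)/HD(z,P) − 1| ≤ sup_{H ∈ 𝓗_z} |Q(H)/P(H) − 1|`.  In particular, the same inequality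
holds with `Q` the empirical measure `P_n` of an i.i.d. sample from `P`, at the point `t_n x`. -/
theorem halfspace_depth_ratio_bound
    {d : ℕ} (P Q : Measure (EuclideanSpace ℝ (Fin d)))
    [IsProbabilityMeasure P] [IsProbabilityMeasure Q] :
    (∀ z : EuclideanSpace ℝ (Fin d),
      0 < HD P z →
      (∃ H ∈ halfspacesAt z, (P H).toReal = HD P z) →
      (∃ H ∈ halfspacesAt z, (Q H).toReal = HD Q z) →
      |HD Q z / HD P z - 1| ≤
        sSup {r : ℝ | ∃ H ∈ halfspacesAt z, r = |(Q H).toReal / (P H).toReal - 1|}) ∧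
    (∀ {Ω : Type} [MeasurableSpace Ω] (μ : Measure Ω) [IsProbabilityMeasure μ]
      (X : ℕ → Ω → EuclideanSpace ℝ (Fin d)),
      (∀ i, Measurable (X i)) →
      ProbabilityTheory.iIndepFun X μ →
      (∀ i, Measure.map (X i) μ = P) →
      ∀ (n : ℕ) (ω : Ω) (tn : ℝ) (x : EuclideanSpace ℝ (Fin d)),
        0 < tn →
        0 < HD P (tn • x) →
        (∃ H ∈ halfspacesAt (tn • x), (P H).toReal = HD P (tn • x)) →
        (∃ H ∈ halfspacesAt (tn • x),
          (empMeasure n (fun i => X i ω) H).toReal = HD (empMeasure n (fun i => X i ω)) (tn • x)) →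
        |HD (empMeasure n (fun i => X i ω)) (tn • x) / HD P (tn • x) - 1| ≤
          sSup {r : ℝ | ∃ H ∈ halfspacesAt (tn • x),
            r = |(empMeasure n (fun i => X i ω) H).toReal / (P H).toReal - 1|}) :=
  halfspace_depth_ratio_bound_general P Q
end
end

section
/- Let P be a Borel probability measure on ℝ^d, P_n the empirical measure of an i.i.d. sample from P, x ∈ ℝ^d, t_n > 0, and γ_n > 0 such that HD(t_n x, P) > γ_n and the infima defining HD(t_n x,P) and HD(t_n x,P_n) over closed halfspaces containing t_n x are attained. Then |HD(t_n x,P_n)/HD(t_n x,P) − 1| ≤ sup{ |P_n(H)/P(H) − 1| : H ∈ 𝓗_{t_n x}, P(H) ≥ γ_n }. -/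
open MeasureTheory Filter Topology
open scoped RealInnerProductSpace ENNReal Pointwise

noncomputable section

/-! If `HD(z,P)` is attained at `H_P` and `HD(z,P_n)` at `H_n`, then
`HD(z,P_n)/HD(z,P) ≤ P_n(H_P)/P(H_P)` and `HD(z,P_n)/HD(z,P) ≥ P_n(H_n)/P(H_n)`, because
each depth is a minimum. Both halfspaces have `P`-mass at least `HD(z,P) > γ_n`, so both
ratios enter the supremum. -/

theorem abs_div_sub_one_le_max {p p' q q' : ℝ} (hp : 0 < p) (hpp' : p ≤ p') (hq : 0 ≤ q)
    (hqq' : q ≤ q') : |q / p - 1| ≤ max |q' / p - 1| |q / p' - 1| := by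
  have upper : q / p ≤ q' / p := by gcongr
  have lower : q / p' ≤ q / p := by gcongr
  rw [abs_le]
  constructor
  · linarith [neg_abs_le (q / p' - 1), le_max_right |q' / p - 1| |q / p' - 1|]
  · linarith [le_abs_self (q' / p - 1), le_max_left |q' / p - 1| |q / p' - 1|]

section RatioOfMinima

variable {α : Type*} {s : Set α} {f g : α → ℝ} {γ : ℝ}

theorem bddAbove_abs_div_sub_one {C : ℝ} (hγ : 0 < γ) (hg : ∀ a, 0 ≤ g a ∧ g a ≤ C) :
    BddAbove {r : ℝ | ∃ a ∈ s, γ ≤ f a ∧ r = |g a / f a - 1|} := by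
  refine ⟨C / γ + 1, ?_⟩
  rintro r ⟨a, -, hγa, rfl⟩
  have hratio : g a / f a ≤ C / γ := div_le_div₀ ((hg a).1.trans (hg a).2) (hg a).2 hγ hγa
  calc |g a / f a - 1| ≤ |g a / f a| + |1| := abs_sub _ _
    _ = g a / f a + 1 := by rw [abs_one, abs_of_nonneg (div_nonneg (hg a).1 (hγ.le.trans hγa))]
    _ ≤ C / γ + 1 := by linarith

theorem abs_div_sub_one_le_csSup_of_isLeast {p q : ℝ} (hp : IsLeast (f '' s) p)
    (hq : IsLeast (g '' s) q) (hγ : 0 < γ) (hγp : γ < p) (hg0 : ∀ a, 0 ≤ g a)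
    (hbdd : BddAbove {r : ℝ | ∃ a ∈ s, γ ≤ f a ∧ r = |g a / f a - 1|}) :
    |q / p - 1| ≤ sSup {r : ℝ | ∃ a ∈ s, γ ≤ f a ∧ r = |g a / f a - 1|} := by
  obtain ⟨⟨a, ha, rfl⟩, hp_le⟩ := hp
  obtain ⟨⟨b, hb, rfl⟩, hq_le⟩ := hq
  have hfb : f a ≤ f b := hp_le ⟨b, hb, rfl⟩
  refine (abs_div_sub_one_le_max (hγ.trans hγp) hfb (hg0 b) (hq_le ⟨a, ha, rfl⟩)).trans
    (max_le (le_csSup hbdd ⟨a, ha, hγp.le, rfl⟩) (le_csSup hbdd ⟨b, hb, ?_, rfl⟩))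
  linarith

end RatioOfMinima

theorem isLeast_HD_of_attained {d : ℕ} {ν : Measure (EuclideanSpace ℝ (Fin d))}
    {z : EuclideanSpace ℝ (Fin d)} (h : ∃ H ∈ halfspacesAt z, (ν H).toReal = HD ν z) :
    IsLeast ((fun H => (ν H).toReal) '' halfspacesAt z) (HD ν z) := by
  obtain ⟨H, hH, hdepth⟩ := h
  refine ⟨⟨H, hH, hdepth⟩, fun r hr => csInf_le ⟨0, ?_⟩ hr⟩
  rintro _ ⟨G, -, rfl⟩
  exact ENNReal.toReal_nonneg

instance empMeasure.instIsZeroOrProbabilityMeasure {d : ℕ} (n : ℕ)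
    (X : ℕ → EuclideanSpace ℝ (Fin d)) :
    IsZeroOrProbabilityMeasure (empMeasure n X) := by
  constructor
  rcases Nat.eq_zero_or_pos n with rfl | hn
  · simp [empMeasure]
  · right
    simp only [empMeasure, Measure.smul_apply, Measure.finsetSum_apply, measure_univ,
      Finset.sum_const, Finset.card_range, nsmul_eq_mul, mul_one, smul_eq_mul]
    exact ENNReal.inv_mul_cancel (by exact_mod_cast hn.ne') (ENNReal.natCast_ne_top n)

theorem halfspace_depth_ratio_bound_restricted_general
    {d : ℕ} (P : Measure (EuclideanSpace ℝ (Fin d)))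
    {Ω : Type}
    (X : ℕ → Ω → EuclideanSpace ℝ (Fin d))
    (n : ℕ) (ω : Ω) (tn γn : ℝ) (x : EuclideanSpace ℝ (Fin d))
    (hγn : 0 < γn)
    (hdepth : γn < HD P (tn • x))
    (hattP : ∃ H ∈ halfspacesAt (tn • x), (P H).toReal = HD P (tn • x))
    (hattPn : ∃ H ∈ halfspacesAt (tn • x),
      (empMeasure n (fun i => X i ω) H).toReal = HD (empMeasure n (fun i => X i ω)) (tn • x)) :
    |HD (empMeasure n (fun i => X i ω)) (tn • x) / HD P (tn • x) - 1| ≤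
      sSup {r : ℝ | ∃ H ∈ halfspacesAt (tn • x), γn ≤ (P H).toReal ∧
        r = |(empMeasure n (fun i => X i ω) H).toReal / (P H).toReal - 1|} := by
  have hmass : ∀ H, 0 ≤ (empMeasure n (fun i => X i ω) H).toReal ∧
      (empMeasure n (fun i => X i ω) H).toReal ≤ 1 :=
    fun _ => ⟨ENNReal.toReal_nonneg, measureReal_le_one⟩
  exact abs_div_sub_one_le_csSup_of_isLeast
    (isLeast_HD_of_attained hattP) (isLeast_HD_of_attained hattPn) hγn hdepth
    (fun H => (hmass H).1) (bddAbove_abs_div_sub_one hγn hmass)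

/-- If `HD(t_n x, P) > γ_n > 0` and the infima defining `HD(t_n x,P)` and
`HD(t_n x,P_n)` over closed halfspaces containing `t_n x` are attained, then
`|HD(t_n x,P_n)/HD(t_n x,P) − 1| ≤ sup{ |P_n(H)/P(H) − 1| : H ∈ 𝓗_{t_n x}, P(H) ≥ γ_n }`. -/
theorem halfspace_depth_ratio_bound_restricted
    {d : ℕ} (P : Measure (EuclideanSpace ℝ (Fin d))) [IsProbabilityMeasure P]
    {Ω : Type} [MeasurableSpace Ω] (μ : Measure Ω) [IsProbabilityMeasure μ]
    (X : ℕ → Ω → EuclideanSpace ℝ (Fin d))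
    (hmeas : ∀ i, Measurable (X i))
    (hindep : ProbabilityTheory.iIndepFun X μ)
    (hdist : ∀ i, Measure.map (X i) μ = P)
    (n : ℕ) (ω : Ω) (tn γn : ℝ) (x : EuclideanSpace ℝ (Fin d))
    (htn : 0 < tn) (hγn : 0 < γn)
    (hdepth : γn < HD P (tn • x))
    (hattP : ∃ H ∈ halfspacesAt (tn • x), (P H).toReal = HD P (tn • x))
    (hattPn : ∃ H ∈ halfspacesAt (tn • x),
      (empMeasure n (fun i => X i ω) H).toReal = HD (empMeasure n (fun i => X i ω)) (tn • x)) :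
    |HD (empMeasure n (fun i => X i ω)) (tn • x) / HD P (tn • x) - 1| ≤
      sSup {r : ℝ | ∃ H ∈ halfspacesAt (tn • x), γn ≤ (P H).toReal ∧
        r = |(empMeasure n (fun i => X i ω) H).toReal / (P H).toReal - 1|} :=
  halfspace_depth_ratio_bound_restricted_general P X n ω tn γn x hγn hdepth hattP hattPn
end
end
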